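/- Let G = (V, E) be a graph with a linear order < on E and A ⊆ E. Order the edges of E in a sequence so that all edges of A come first in increasing order, followed by the edges of E \ A in decreasing order; greedily add edges from this sequence to the empty graph on V whenever doing so keeps the graph a forest. Then the resulting graph F = (V, A_f) is a spanning forest of G, every edge of A \ A_f is externally active in F, and every edge of A_f \ A is internally active in F. -/

import Mathlib

open Finset

attribute [local instance] Classical.propDecidable

/-- A multigraph on vertex type `V` with edge index type `E` is given by a map
`ends : E → Sym2 V` (loops and parallel edges are allowed).  For an edge subset
`A ⊆ E`, `edgeGraph ends A` is the simple graph on `V` whose adjacency is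
witnessed by some edge of `A`; it determines the connected components of the
spanning subgraph `(V, A)`. -/
def edgeGraph {V E : Type} (ends : E → Sym2 V) (A : Finset E) : SimpleGraph V where
  Adj a b := a ≠ b ∧ ∃ e ∈ A, ends e = s(a, b)
  symm := by
    constructor
    rintro a b ⟨hab, e, he, hs⟩
    exact ⟨Ne.symm hab, e, he, by rw [hs, Sym2.eq_swap]⟩
  loopless := by constructor; rintro a ⟨h, -⟩; exact h rfl

/-- `kc ends A` is the number of connected components of the spanning subgraph `(V, A)`. -/
noncomputable def kc {V E : Type} (ends : E → Sym2 V) (A : Finset E) : ℕ :=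
  Nat.card (edgeGraph ends A).ConnectedComponent

/-- `(V, A)` is a spanning forest of `(V, E)`: it is a forest
(`|A| + k((V,A)) = |V|`, which rules out loops, parallel edges and cycles)
with as many connected components as the whole graph. -/
def IsSpanningForest {V E : Type} [Fintype V] [Fintype E] (ends : E → Sym2 V)
    (A : Finset E) : Prop :=
  A.card + kc ends A = Fintype.card V ∧ kc ends A = kc ends Finset.univ

/-- `F - e + f`. -/
def swapEdge {E : Type} [DecidableEq E] (A : Finset E) (e f : E) : Finset E :=
  insert f (A.erase e)

/-- `e` is internally active in the spanning forest `(V, A)`. -/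
def InternallyActive {V E : Type} [Fintype V] [Fintype E] [DecidableEq E] [LinearOrder E]
    (ends : E → Sym2 V) (A : Finset E) (e : E) : Prop :=
  e ∈ A ∧ ¬ ∃ f, f ∉ A ∧ e < f ∧ IsSpanningForest ends (swapEdge A e f)

/-- `f` is externally active in the spanning forest `(V, A)`. -/
def ExternallyActive {V E : Type} [Fintype V] [Fintype E] [DecidableEq E] [LinearOrder E]
    (ends : E → Sym2 V) (A : Finset E) (f : E) : Prop :=
  f ∉ A ∧ ¬ ∃ e, e ∈ A ∧ f < e ∧ IsSpanningForest ends (swapEdge A e f)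

/-- The set `E_i(F)` of internally active edges of the spanning forest `F = (V, A)`. -/
noncomputable def intAct {V E : Type} [Fintype V] [Fintype E] [DecidableEq E] [LinearOrder E]
    (ends : E → Sym2 V) (A : Finset E) : Finset E :=
  Finset.univ.filter (InternallyActive ends A)

/-- The set `E_e(F)` of externally active edges of the spanning forest `F = (V, A)`. -/
noncomputable def extAct {V E : Type} [Fintype V] [Fintype E] [DecidableEq E] [LinearOrder E]
    (ends : E → Sym2 V) (A : Finset E) : Finset E :=
  Finset.univ.filter (ExternallyActive ends A)

/-- One greedy step: add the edge `e` to `S` if the result is still a forest. -/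
noncomputable def greedyStep {V E : Type} [Fintype V] [DecidableEq E]
    (ends : E → Sym2 V) (S : Finset E) (e : E) : Finset E :=
  if (insert e S).card + kc ends (insert e S) = Fintype.card V then insert e S else S

/-- The edges of `A` in increasing order. -/
noncomputable def sortInc {E : Type} [LinearOrder E] (A : Finset E) : List E :=
  A.sort (· ≤ ·)

/-- The edges of `E \ A` in decreasing order. -/
noncomputable def sortDecCompl {E : Type} [Fintype E] [DecidableEq E] [LinearOrder E]
    (A : Finset E) : List E :=
  List.reverse (Finset.sort (Finset.univ \ A) (· ≤ ·))

/-- The greedy edge sequence: edges of `A` in increasing order followed by the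
edges of `E \ A` in decreasing order. -/
noncomputable def greedySeq {E : Type} [Fintype E] [DecidableEq E] [LinearOrder E]
    (A : Finset E) : List E :=
  sortInc A ++ sortDecCompl A

/-- The greedy forest: fold the greedy step over the greedy edge sequence,
starting from the edgeless graph. -/
noncomputable def greedyForest {V E : Type} [Fintype V] [Fintype E] [DecidableEq E]
    [LinearOrder E] (ends : E → Sym2 V) (A : Finset E) : Finset E :=
  (greedySeq A).foldl (greedyStep ends) ∅

/-!
A greedy step keeps the current edge set a forest, and it rejects an edge only when the ends of
that edge are already joined by the forest built so far. Hence every edge `f` outside the greedy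
forest `F` is spanned by edges of `F` that precede `f` in the greedy sequence; in particular `F`
is spanning. For `f ∈ A \ F` these edges are smaller than `f`, and for `e ∈ F \ A` and a larger
`f ∉ F` they do not include `e`. In both cases the ends of `f` stay joined in `F - e`, so
`F - e + f` contains a cycle.
-/

namespace SimpleGraph

theorem Reachable.rel_of_adj {V : Type} {G : SimpleGraph V} {r : V → V → Prop}
    (hrefl : ∀ x, r x x) (htrans : ∀ x y z, r x y → r y z → r x z)
    (hadj : ∀ x y, G.Adj x y → r x y) {x y : V} (h : G.Reachable x y) : r x y := by
  obtain ⟨w⟩ := h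
  induction w with
  | nil => exact hrefl _
  | cons ha _ ih => exact htrans _ _ _ (hadj _ _ ha) ih

end SimpleGraph

open SimpleGraph

section Spanned

variable {V E : Type}

/-- `e` lies in the closure of `S` in the graphic matroid. -/
def Spanned (ends : E → Sym2 V) (S : Finset E) (e : E) : Prop :=
  ∀ x y, ends e = s(x, y) → (edgeGraph ends S).Reachable x y

theorem edgeGraph_mono (ends : E → Sym2 V) {S T : Finset E} (h : S ⊆ T) :
    edgeGraph ends S ≤ edgeGraph ends T := by
  rintro x y ⟨hxy, e, he, hs⟩
  exact ⟨hxy, e, h he, hs⟩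

theorem spanned_of_mem (ends : E → Sym2 V) {S : Finset E} {e : E} (he : e ∈ S) :
    Spanned ends S e := by
  intro x y hxy
  by_cases h : x = y
  · exact h ▸ Reachable.refl x
  · exact Adj.reachable ⟨h, e, he, hxy⟩

theorem Spanned.mono {ends : E → Sym2 V} {S T : Finset E} {e : E} (h : Spanned ends S e)
    (hST : S ⊆ T) : Spanned ends T e :=
  fun x y hxy => (h x y hxy).mono (edgeGraph_mono ends hST)

theorem reachable_iff_of_forall_spanned (ends : E → Sym2 V) {S T : Finset E} (hST : S ⊆ T)
    (h : ∀ e ∈ T, Spanned ends S e) (x y : V) :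
    (edgeGraph ends T).Reachable x y ↔ (edgeGraph ends S).Reachable x y := by
  refine ⟨fun hT => hT.rel_of_adj Reachable.refl (fun _ _ _ => Reachable.trans) ?_,
    fun hS => hS.mono (edgeGraph_mono ends hST)⟩
  rintro u v ⟨-, e, he, hs⟩
  exact h e he u v hs

theorem kc_eq_of_forall_spanned (ends : E → Sym2 V) {S T : Finset E} (hST : S ⊆ T)
    (h : ∀ e ∈ T, Spanned ends S e) : kc ends T = kc ends S := by
  have hreach : (edgeGraph ends T).Reachable = (edgeGraph ends S).Reachable :=
    funext₂ fun x y => propext (reachable_iff_of_forall_spanned ends hST h x y)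
  exact congrArg (fun r => Nat.card (Quot r)) hreach

theorem kc_insert_of_spanned [DecidableEq E] (ends : E → Sym2 V) {S : Finset E} {e : E}
    (h : Spanned ends S e) : kc ends (insert e S) = kc ends S := by
  refine kc_eq_of_forall_spanned ends (subset_insert e S) fun g hg => ?_
  rcases mem_insert.1 hg with rfl | hg
  · exact h
  · exact spanned_of_mem ends hg

theorem reachable_of_reachable_insert [DecidableEq E] (ends : E → Sym2 V) {S : Finset E}
    {e : E} {a b : V}
    (he : ends e = s(a, b)) {x y : V} (h : (edgeGraph ends (insert e S)).Reachable x y) :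
    (edgeGraph ends S).Reachable x y ∨
      (((edgeGraph ends S).Reachable x a ∨ (edgeGraph ends S).Reachable x b) ∧
        ((edgeGraph ends S).Reachable y a ∨ (edgeGraph ends S).Reachable y b)) := by
  set G := edgeGraph ends S
  set C : Set V := {v | G.Reachable v a ∨ G.Reachable v b}
  have hC : ∀ {u v}, G.Reachable u v → v ∈ C → u ∈ C :=
    fun huv hv => hv.imp huv.trans huv.trans
  refine h.rel_of_adj (r := fun x y => G.Reachable x y ∨ (x ∈ C ∧ y ∈ C))
    (fun x => .inl .rfl) ?_ ?_
  · rintro x y z (hxy | ⟨hx, hy⟩) (hyz | ⟨hy', hz⟩)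
    · exact .inl (hxy.trans hyz)
    · exact .inr ⟨hC hxy hy', hz⟩
    · exact .inr ⟨hx, hC hyz.symm hy⟩
    · exact .inr ⟨hx, hz⟩
  · rintro x y ⟨hxy, g, hg, hs⟩
    rcases mem_insert.1 hg with rfl | hg
    · rcases Sym2.eq_iff.1 (he.symm.trans hs) with ⟨rfl, rfl⟩ | ⟨rfl, rfl⟩
      · exact .inr ⟨.inl .rfl, .inr .rfl⟩
      · exact .inr ⟨.inr .rfl, .inl .rfl⟩
    · exact .inl (Adj.reachable ⟨hxy, g, hg, hs⟩)

theorem kc_insert_add_one_of_not_spanned [Fintype V] [DecidableEq E] (ends : E → Sym2 V)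
    {S : Finset E} {e : E} (hs : ¬ Spanned ends S e) :
    kc ends (insert e S) + 1 = kc ends S := by
  obtain ⟨a, b, he, hab⟩ :
      ∃ a b, ends e = s(a, b) ∧ ¬ (edgeGraph ends S).Reachable a b := by
    simpa [Spanned] using hs
  set G := edgeGraph ends S
  set G' := edgeGraph ends (insert e S)
  have hle : G ≤ G' := edgeGraph_mono ends (subset_insert e S)
  set φ := ConnectedComponent.map (Hom.ofLE hle)
  have hab' : G'.Reachable a b :=
    Adj.reachable ⟨fun h => hab (h ▸ .rfl), e, mem_insert_self e S, he⟩
  -- `φ` is onto and glues exactly the components of `a` and `b`.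
  have hlt : Fintype.card G'.ConnectedComponent < Fintype.card G.ConnectedComponent :=
    Fintype.card_lt_of_surjective_not_injective φ (ConnectedComponent.surjective_map_ofLE hle)
      fun hinj => hab (ConnectedComponent.exact (hinj (ConnectedComponent.sound hab')))
  have hge : (univ.erase (G.connectedComponentMk b)).card ≤
      Fintype.card G'.ConnectedComponent := by
    refine card_le_card_of_injOn φ (fun _ _ => mem_univ _) ?_
    intro c₁ hc₁ c₂ hc₂ h
    induction c₁ using ConnectedComponent.ind with | h x => ?_
    induction c₂ using ConnectedComponent.ind with | h y => ?_
    rw [mem_coe, mem_erase, Ne, ConnectedComponent.eq] at hc₁ hc₂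
    rcases reachable_of_reachable_insert ends he (ConnectedComponent.exact h) with
      hxy | ⟨hx, hy⟩
    · exact ConnectedComponent.sound hxy
    · exact ConnectedComponent.sound
        ((hx.resolve_right hc₁.1).trans (hy.resolve_right hc₂.1).symm)
  rw [card_erase_of_mem (mem_univ _), card_univ] at hge
  simp only [← Nat.card_eq_fintype_card] at hlt hge
  change Nat.card G'.ConnectedComponent + 1 = Nat.card G.ConnectedComponent
  omega

theorem edgeGraph_empty (ends : E → Sym2 V) : edgeGraph ends ∅ = ⊥ := by
  ext
  simp [edgeGraph]

theorem kc_empty [Fintype V] (ends : E → Sym2 V) : kc ends (∅ : Finset E) = Fintype.card V := by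
  rw [kc, edgeGraph_empty, ← Nat.card_eq_fintype_card]
  exact (Nat.card_eq_of_bijective _ ⟨fun v w h => reachable_bot.1 (ConnectedComponent.exact h),
    Quot.mk_surjective⟩).symm

end Spanned

section Forests

variable {V E : Type} [Fintype V]

def IsForest (ends : E → Sym2 V) (S : Finset E) : Prop :=
  S.card + kc ends S = Fintype.card V

theorem isForest_empty (ends : E → Sym2 V) : IsForest ends (∅ : Finset E) := by
  simp [IsForest, kc_empty]

variable [DecidableEq E]

theorem card_le_card_add_kc (ends : E → Sym2 V) (S : Finset E) :
    Fintype.card V ≤ S.card + kc ends S := by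
  induction S using Finset.induction_on with
  | empty => simp [kc_empty]
  | @insert e S he ih =>
    rw [card_insert_of_notMem he]
    by_cases hs : Spanned ends S e
    · rw [kc_insert_of_spanned ends hs]
      omega
    · have := kc_insert_add_one_of_not_spanned ends hs
      omega

theorem not_isForest_insert_of_spanned (ends : E → Sym2 V) {S : Finset E} {f : E}
    (hf : f ∉ S) (hs : Spanned ends S f) : ¬ IsForest ends (insert f S) := by
  have := card_le_card_add_kc ends S
  rw [IsForest, card_insert_of_notMem hf, kc_insert_of_spanned ends hs]
  omega

theorem not_isSpanningForest_swapEdge [Fintype E] {ends : E → Sym2 V} {F P : Finset E} {e f : E}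
    (hf : f ∉ F) (hP : P ⊆ F.erase e) (hs : Spanned ends P f) :
    ¬ IsSpanningForest ends (swapEdge F e f) :=
  fun h => not_isForest_insert_of_spanned ends (fun hm => hf (mem_of_mem_erase hm))
    (hs.mono hP) h.1

end Forests

section Greedy

variable {V E : Type} [Fintype V] [DecidableEq E] {ends : E → Sym2 V}

theorem isForest_greedyStep {S : Finset E} (h : IsForest ends S) (e : E) :
    IsForest ends (greedyStep ends S e) := by
  unfold greedyStep
  split_ifs with hg
  exacts [hg, h]

theorem subset_greedyStep (S : Finset E) (e : E) : S ⊆ greedyStep ends S e := by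
  unfold greedyStep
  split_ifs
  exacts [subset_insert e S, Subset.rfl]

theorem greedyStep_subset (S : Finset E) (e : E) : greedyStep ends S e ⊆ insert e S := by
  unfold greedyStep
  split_ifs
  exacts [Subset.rfl, subset_insert e S]

theorem greedyStep_eq_insert {S : Finset E} {e : E} (h : IsForest ends (insert e S)) :
    greedyStep ends S e = insert e S :=
  if_pos h

theorem spanned_of_notMem_greedyStep {S : Finset E} {e : E} (h : IsForest ends S)
    (he : e ∉ greedyStep ends S e) : Spanned ends S e := by
  by_contra hs
  have heS : e ∉ S := fun hm => he (subset_greedyStep S e hm)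
  have hk := kc_insert_add_one_of_not_spanned ends hs
  have hforest : IsForest ends (insert e S) := by
    rw [IsForest, card_insert_of_notMem heS]
    unfold IsForest at h
    omega
  exact he (greedyStep_eq_insert hforest ▸ mem_insert_self e S)

theorem isForest_foldl_greedyStep (l : List E) {S : Finset E} (h : IsForest ends S) :
    IsForest ends (l.foldl (greedyStep ends) S) := by
  induction l generalizing S with
  | nil => exact h
  | cons e l ih => exact ih (isForest_greedyStep h e)

theorem subset_foldl_greedyStep (l : List E) (S : Finset E) :
    S ⊆ l.foldl (greedyStep ends) S := by
  induction l generalizing S with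
  | nil => exact Subset.rfl
  | cons e l ih => exact (subset_greedyStep S e).trans (ih _)

theorem mem_of_mem_foldl_greedyStep {l : List E} {S : Finset E} {g : E}
    (hg : g ∈ l.foldl (greedyStep ends) S) : g ∈ S ∨ g ∈ l := by
  induction l generalizing S with
  | nil => exact .inl hg
  | cons e l ih =>
    rcases ih hg with hg | hg
    · rcases mem_insert.1 (greedyStep_subset S e hg) with rfl | hg
      exacts [.inr List.mem_cons_self, .inl hg]
    · exact .inr (List.mem_cons_of_mem e hg)

/-- The witness `P` is the forest built before `f` was examined. -/
theorem exists_spanned_of_notMem_foldl_greedyStep {r : E → E → Prop} {l : List E}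
    (hl : l.Pairwise r) {f : E} (hf : f ∈ l) (hfT : f ∉ l.foldl (greedyStep ends) ∅) :
    ∃ P ⊆ l.foldl (greedyStep ends) ∅, (∀ g ∈ P, r g f) ∧ Spanned ends P f := by
  obtain ⟨p, q, rfl⟩ := List.append_of_mem hf
  set P := p.foldl (greedyStep ends) ∅
  have hPT : greedyStep ends P f ⊆ (p ++ f :: q).foldl (greedyStep ends) ∅ := by
    rw [List.foldl_append, List.foldl_cons]
    exact subset_foldl_greedyStep q _
  refine ⟨P, (subset_greedyStep P f).trans hPT, fun g hg => ?_,
    spanned_of_notMem_greedyStep (isForest_foldl_greedyStep p (isForest_empty ends))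
      fun hm => hfT (hPT hm)⟩
  rcases mem_of_mem_foldl_greedyStep hg with hg | hg
  · exact absurd hg (notMem_empty g)
  · exact (List.pairwise_append.1 hl).2.2 g hg f List.mem_cons_self

end Greedy

section GreedySeq

variable {E : Type} [LinearOrder E]

/-- The order in which `greedySeq A` lists the edges. -/
def GreedyPrecedes (A : Finset E) (g f : E) : Prop :=
  (g ∈ A ∧ f ∈ A ∧ g < f) ∨ (g ∈ A ∧ f ∉ A) ∨ (g ∉ A ∧ f ∉ A ∧ f < g)

theorem GreedyPrecedes.lt_of_mem {A : Finset E} {g f : E} (h : GreedyPrecedes A g f)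
    (hf : f ∈ A) : g < f := by
  rcases h with ⟨-, -, h⟩ | ⟨-, h⟩ | ⟨-, h, -⟩
  exacts [h, absurd hf h, absurd hf h]

theorem GreedyPrecedes.lt_of_notMem {A : Finset E} {g f : E} (h : GreedyPrecedes A g f)
    (hg : g ∉ A) : f < g := by
  rcases h with ⟨h, -, -⟩ | ⟨h, -⟩ | ⟨-, -, h⟩
  exacts [absurd h hg, absurd h hg, h]

variable [Fintype E] [DecidableEq E]

theorem pairwise_greedySeq (A : Finset E) : (greedySeq A).Pairwise (GreedyPrecedes A) := by
  have hinc : (sortInc A).Pairwise (· < ·) := by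
    unfold sortInc; convert (sortedLT_sort A).pairwise
  have hdec : (sortDecCompl A).Pairwise (· > ·) :=
    List.pairwise_reverse.2 (by convert (sortedLT_sort (univ \ A)).pairwise)
  have hmemInc : ∀ {g}, g ∈ sortInc A → g ∈ A := fun hg => (mem_sort _).1 hg
  have hmemDec : ∀ {g}, g ∈ sortDecCompl A → g ∉ A :=
    fun hg => (mem_sdiff.1 ((mem_sort _).1 (List.mem_reverse.1 hg))).2
  refine List.pairwise_append.2 ⟨?_, ?_, ?_⟩
  · exact hinc.imp_of_mem fun hg hf hlt => .inl ⟨hmemInc hg, hmemInc hf, hlt⟩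
  · exact hdec.imp_of_mem fun hg hf hlt => .inr (.inr ⟨hmemDec hg, hmemDec hf, hlt⟩)
  · exact fun g hg f hf => .inr (.inl ⟨hmemInc hg, hmemDec hf⟩)

theorem mem_greedySeq (A : Finset E) (e : E) : e ∈ greedySeq A := by
  by_cases h : e ∈ A
  · exact List.mem_append_left _ ((mem_sort _).2 h)
  · exact List.mem_append_right _
      (List.mem_reverse.2 ((mem_sort _).2 (mem_sdiff.2 ⟨mem_univ e, h⟩)))

end GreedySeq

/-- The greedy process produces a spanning forest `F = (V, A_f)`
such that every edge of `A \ A_f` is externally active and every edge of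
`A_f \ A` is internally active in `F`. -/
theorem greedy_forest_activities {V E : Type} [Fintype V] [Fintype E] [DecidableEq E]
    [LinearOrder E] (ends : E → Sym2 V) (A : Finset E) :
    IsSpanningForest ends (greedyForest ends A) ∧
    (∀ f ∈ A \ greedyForest ends A, ExternallyActive ends (greedyForest ends A) f) ∧
    (∀ e ∈ greedyForest ends A \ A, InternallyActive ends (greedyForest ends A) e) := by
  set F := greedyForest ends A
  have hrejected :
      ∀ f ∉ F, ∃ P ⊆ F, (∀ g ∈ P, GreedyPrecedes A g f) ∧ Spanned ends P f := fun f hf =>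
    exists_spanned_of_notMem_foldl_greedyStep (pairwise_greedySeq A) (mem_greedySeq A f) hf
  have hspanned : ∀ g, Spanned ends F g := by
    intro g
    by_cases hg : g ∈ F
    · exact spanned_of_mem ends hg
    · obtain ⟨P, hPF, -, hP⟩ := hrejected g hg
      exact hP.mono hPF
  refine ⟨⟨isForest_foldl_greedyStep _ (isForest_empty ends),
    (kc_eq_of_forall_spanned ends (subset_univ F) fun g _ => hspanned g).symm⟩, ?_, ?_⟩
  · intro f hf
    obtain ⟨hfA, hfF⟩ := mem_sdiff.1 hf
    refine ⟨hfF, fun ⟨e, _, hlt, hswap⟩ => ?_⟩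
    obtain ⟨P, hPF, hprec, hP⟩ := hrejected f hfF
    refine not_isSpanningForest_swapEdge hfF (fun g hg => mem_erase.2 ⟨?_, hPF hg⟩) hP hswap
    exact ((hprec g hg).lt_of_mem hfA).trans hlt |>.ne
  · intro e he
    obtain ⟨heF, heA⟩ := mem_sdiff.1 he
    refine ⟨heF, fun ⟨f, hfF, hlt, hswap⟩ => ?_⟩
    obtain ⟨P, hPF, hprec, hP⟩ := hrejected f hfF
    refine not_isSpanningForest_swapEdge hfF (fun g hg => mem_erase.2 ⟨?_, hPF hg⟩) hP hswap
    rintro rfl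
    exact ((hprec g hg).lt_of_notMem heA).not_gt hlt
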